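/- Let T be a tree, v a leaf of T and let v1 x1 x2 ... xn v2 be a path between leaves with components X_1,...,X_n attached. The total number of subtrees of T equals the number of subtrees containing no path vertex (i.e., subtrees lying inside some X_i minus its root x_i, counted appropriately) plus, for each pair 1 ≤ i ≤ j ≤ n, the number of subtrees whose intersection with the path is exactly x_i x_{i+1} ... x_j, which equals Π_{m=i}^{j} C_m where C_m = f_{x_m}(X_m). In particular, f(T) = Σ_{1 ≤ i ≤ j ≤ n} Π_{m=i}^{j} C_m + Σ_{m=1}^{n} (f(X_m) - C_m). -/

import Mathlib

/-!
Deleting the path edges `x_i x_{i+1}` (`1 ≤ i < n`) of the tree splits it into the components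
`X_1, …, X_n`, and the only edges of the tree joining two different components are these path
edges. So a subtree avoiding `x_1, …, x_n` lies inside one `X_m` without containing `x_m`, while a
subtree meeting the path meets it in a segment `x_i … x_j` and is the disjoint union of the
subtrees `s ∩ X_m ∋ x_m` (`i ≤ m ≤ j`; these are connected because two subtrees of a tree meet in
a subtree). Conversely any such choice of subtrees glues along the path edges to a subtree of `T`,
which gives the product `∏_{m=i}^{j} C_m`.
-/

open SimpleGraph

noncomputable def numSubtrees {V : Type*} [Fintype V] (G : SimpleGraph V) : ℕ :=
  Set.ncard {s : Set V | s.Nonempty ∧ (G.induce s).Connected}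

noncomputable def numSubtreesIn {V : Type*} [Fintype V] (G : SimpleGraph V)
    (A : Set V) (u : V) : ℕ :=
  Set.ncard {s : Set V | u ∈ s ∧ s ⊆ A ∧ (G.induce s).Connected}

noncomputable def numSubtreesInSet {V : Type*} [Fintype V] (G : SimpleGraph V)
    (A : Set V) : ℕ :=
  Set.ncard {s : Set V | s.Nonempty ∧ s ⊆ A ∧ (G.induce s).Connected}

def reachSet {V : Type*} (G : SimpleGraph V) (u : V) : Set V :=
  {v | G.Reachable u v}

lemma Set.ncard_univ_pi {ι : Type*} [Fintype ι] {β : ι → Type*} (t : ∀ i, Set (β i)) :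
    (Set.univ.pi t).ncard = ∏ i, (t i).ncard := by
  rw [← Nat.card_coe_set_eq, Nat.card_congr (Equiv.Set.univPi t), Nat.card_pi]
  simp only [Nat.card_coe_set_eq]

lemma Set.ncard_biUnion_finset {α ι : Type*} [Finite α] (I : Finset ι) {f : ι → Set α}
    (h : (I : Set ι).PairwiseDisjoint f) : (⋃ i ∈ I, f i).ncard = ∑ i ∈ I, (f i).ncard := by
  rw [← finsum_mem_coe_finset, ← I.finite_toSet.ncard_biUnion (fun _ _ => Set.toFinite _) h]
  simp only [Finset.mem_coe]

namespace SimpleGraph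

variable {V : Type*} {G H : SimpleGraph V}

lemma reachSet_eq_supp (G : SimpleGraph V) (u : V) :
    reachSet G u = (G.connectedComponentMk u).supp := by
  ext v
  simp [reachSet, ConnectedComponent.eq, reachable_comm]

lemma induce_reachSet_connected (hGH : G ≤ H) (u : V) :
    (H.induce (reachSet G u)).Connected := by
  rw [reachSet_eq_supp]
  exact (G.connectedComponentMk u).maximal_connected_induce_supp.prop.mono
    (comap_monotone _ hGH)

lemma exists_adj_of_induce_connected {s A : Set V} (hs : (G.induce s).Connected) {u v : V}
    (hu : u ∈ s ∩ A) (hv : v ∈ s \ A) : ∃ a ∈ s ∩ A, ∃ b ∈ s \ A, G.Adj a b := by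
  obtain ⟨p⟩ := hs.preconnected ⟨u, hu.1⟩ ⟨v, hv.1⟩
  obtain ⟨d, -, hd₁, hd₂⟩ := p.exists_boundary_dart {w | w.1 ∈ A} hu.2 hv.2
  exact ⟨d.fst, ⟨d.fst.2, hd₁⟩, d.snd, ⟨d.snd.2, hd₂⟩, d.adj⟩

lemma exists_isPath_support_subset {s : Set V} (hs : (G.induce s).Connected) {u v : V}
    (hu : u ∈ s) (hv : v ∈ s) : ∃ p : G.Walk u v, p.IsPath ∧ ∀ w ∈ p.support, w ∈ s := by
  classical
  obtain ⟨q⟩ := hs.preconnected ⟨u, hu⟩ ⟨v, hv⟩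
  let p : G.Walk u v := q.map (Embedding.induce s).toHom
  refine ⟨p.bypass, p.bypass_isPath, fun w hw => ?_⟩
  have hw' : w ∈ (q.map (Embedding.induce s).toHom).support :=
    p.support_bypass_subset_support hw
  rw [Walk.support_map] at hw'
  obtain ⟨w', -, rfl⟩ := List.mem_map.mp hw'
  exact w'.2

lemma IsAcyclic.induce_inter_connected (hG : G.IsAcyclic) {s t : Set V}
    (hs : (G.induce s).Connected) (ht : (G.induce t).Connected) (hst : (s ∩ t).Nonempty) :
    (G.induce (s ∩ t)).Connected := by
  obtain ⟨u, hu⟩ := hst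
  refine G.induce_connected_of_patches u hu fun {v} hv => ?_
  obtain ⟨p, hp, hps⟩ := exists_isPath_support_subset hs hu.1 hv.1
  obtain ⟨q, hq, hqt⟩ := exists_isPath_support_subset ht hu.2 hv.2
  obtain rfl : p = q := congrArg Subtype.val ((hG.subsingleton_path u v).elim ⟨p, hp⟩ ⟨q, hq⟩)
  exact ⟨{w | w ∈ p.support}, fun w hw => ⟨hps w hw, hqt w hw⟩, p.start_mem_support,
    p.end_mem_support, p.connected_induce_support.preconnected _ _⟩

lemma reachable_of_adj_succ {x : ℕ → V} {i j : ℕ} (hij : i ≤ j)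
    (hadj : ∀ a, i ≤ a → a < j → G.Adj (x a) (x (a + 1))) : G.Reachable (x i) (x j) := by
  induction j, hij using Nat.le_induction with
  | base => rfl
  | succ j hij ih =>
    exact (ih fun a ha ha' => hadj a ha (by omega)).trans (hadj j hij (by omega)).reachable

lemma induce_biUnion_Icc_connected {x : ℕ → V} {t : ℕ → Set V} {i j : ℕ} (hij : i ≤ j)
    (ht : ∀ m ∈ Finset.Icc i j, x m ∈ t m ∧ (G.induce (t m)).Connected)
    (hadj : ∀ a, i ≤ a → a < j → G.Adj (x a) (x (a + 1))) :
    (G.induce (⋃ m ∈ Finset.Icc i j, t m)).Connected := by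
  induction j, hij using Nat.le_induction with
  | base =>
    rw [Finset.Icc_self, Finset.set_biUnion_singleton]
    exact (ht i (by simp)).2
  | succ j hij ih =>
    have ih' := ih (fun m hm => ht m (by simp at hm ⊢; omega))
      (fun a ha ha' => hadj a ha (by omega))
    have hj := ht (j + 1) (by simp; omega)
    rw [← Finset.insert_Icc_right_eq_Icc_add_one (by omega), Finset.set_biUnion_insert,
      Set.union_comm]
    exact connected_induce_union ih'.preconnected hj.2.preconnected
      (Set.mem_biUnion (by simp [hij]) (ht j (by simp [hij])).1) hj.1 (hadj j hij (by omega))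

def subtreesAvoiding (G : SimpleGraph V) (A : Set V) (u : V) : Set (Set V) :=
  {s | s.Nonempty ∧ s ⊆ A ∧ (G.induce s).Connected ∧ u ∉ s}

lemma ncard_subtreesAvoiding [Fintype V] (G : SimpleGraph V) (A : Set V) (u : V) :
    (subtreesAvoiding G A u).ncard = numSubtreesInSet G A - numSubtreesIn G A u := by
  have hdiff : subtreesAvoiding G A u =
      {s | s.Nonempty ∧ s ⊆ A ∧ (G.induce s).Connected} \
        {s | u ∈ s ∧ s ⊆ A ∧ (G.induce s).Connected} := by
    ext s
    simp only [subtreesAvoiding, Set.mem_sdiff, Set.mem_ofPred_eq]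
    tauto
  have hsub : {s | u ∈ s ∧ s ⊆ A ∧ (G.induce s).Connected} ⊆
      {s | s.Nonempty ∧ s ⊆ A ∧ (G.induce s).Connected} :=
    fun s hs => ⟨⟨u, hs.1⟩, hs.2⟩
  rw [hdiff, Set.ncard_sdiff hsub]
  rfl

section Spine

variable {T : SimpleGraph V} {x : ℕ → V} {n : ℕ}

structure IsSpine (T : SimpleGraph V) (x : ℕ → V) (n : ℕ) : Prop where
  adj : ∀ i, 1 ≤ i → i < n → T.Adj (x i) (x (i + 1))
  injOn : Set.InjOn x (Set.Icc 1 n)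

def spineCut (x : ℕ → V) (n : ℕ) : Set (Sym2 V) :=
  {e | ∃ i, 1 ≤ i ∧ i < n ∧ e = s(x i, x (i + 1))}

/-- The paper's `X_m`. -/
def spineComponent (T : SimpleGraph V) (x : ℕ → V) (n m : ℕ) : Set V :=
  reachSet (T.deleteEdges (spineCut x n)) (x m)

def subtreesThrough (T : SimpleGraph V) (x : ℕ → V) (n i j : ℕ) : Set (Set V) :=
  {s | (T.induce s).Connected ∧ ∀ m ∈ Finset.Icc 1 n, (x m ∈ s ↔ m ∈ Finset.Icc i j)}

lemma disjoint_subtreesThrough {i j i' j' : ℕ} (hi : 1 ≤ i) (hij : i ≤ j) (hj : j ≤ n)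
    (hi' : 1 ≤ i') (hj' : j' ≤ n) (hne : (i, j) ≠ (i', j')) :
    Disjoint (subtreesThrough T x n i j) (subtreesThrough T x n i' j') := by
  refine Set.disjoint_left.mpr fun s hs hs' => hne ?_
  have key : ∀ m ∈ Finset.Icc 1 n, (m ∈ Finset.Icc i j ↔ m ∈ Finset.Icc i' j') :=
    fun m hm => (hs.2 m hm).symm.trans (hs'.2 m hm)
  have h₁ := key i; have h₂ := key j; have h₃ := key i'; have h₄ := key j'
  simp only [Finset.mem_Icc] at h₁ h₂ h₃ h₄
  ext <;> simp <;> omega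

lemma mem_spineComponent_self (T : SimpleGraph V) (x : ℕ → V) (n m : ℕ) :
    x m ∈ spineComponent T x n m :=
  Reachable.refl _

lemma induce_spineComponent_connected (T : SimpleGraph V) (x : ℕ → V) (n m : ℕ) :
    (T.induce (spineComponent T x n m)).Connected :=
  induce_reachSet_connected (T.deleteEdges_le _) _

lemma mem_spineComponent_of_adj {a b : V} {m : ℕ} (hab : T.Adj a b)
    (he : s(a, b) ∉ spineCut x n) (ha : a ∈ spineComponent T x n m) : b ∈ spineComponent T x n m :=
  Reachable.trans ha (deleteEdges_adj.mpr ⟨hab, he⟩).reachable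

lemma exists_mem_spineComponent (hT : T.Connected) (hn : 1 ≤ n) (v : V) :
    ∃ m ∈ Finset.Icc 1 n, v ∈ spineComponent T x n m := by
  by_contra hv
  let U := {w | ∃ m ∈ Finset.Icc 1 n, w ∈ spineComponent T x n m}
  obtain ⟨d, -, ⟨m, hm, ha⟩, hb⟩ := (hT.preconnected (x 1) v).some.exists_boundary_dart U
    ⟨1, by simp [hn], mem_spineComponent_self ..⟩ hv
  by_cases he : s(d.fst, d.snd) ∈ spineCut x n
  · obtain ⟨i, hi, hin, he⟩ := he
    rcases Sym2.eq_iff.mp he with ⟨-, hsnd⟩ | ⟨-, hsnd⟩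
    · exact hb ⟨i + 1, by simp; omega, hsnd ▸ mem_spineComponent_self ..⟩
    · exact hb ⟨i, by simp; omega, hsnd ▸ mem_spineComponent_self ..⟩
  · exact hb ⟨m, hm, mem_spineComponent_of_adj d.adj he ha⟩

namespace IsSpine

lemma not_reachable_deleteEdges (hT : T.IsAcyclic) (hx : IsSpine T x n) {k m : ℕ} (hk : 1 ≤ k)
    (hkm : k < m) (hm : m ≤ n) : ¬ (T.deleteEdges (spineCut x n)).Reachable (x k) (x m) := by
  intro hreach
  -- `x k x (k + 1)` is a bridge, yet `x (k + 1)` reaches `x m` along the path without it.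
  have hbridge := isAcyclic_iff_forall_adj_isBridge.mp hT (hx.adj k hk (by omega))
  refine isBridge_iff.mp hbridge ?_
  have hcut : (T.deleteEdges {s(x k, x (k + 1))}).Reachable (x (k + 1)) (x m) := by
    refine reachable_of_adj_succ hkm fun a ha ham =>
      deleteEdges_adj.mpr ⟨hx.adj a (by omega) (by omega), ?_⟩
    rw [Set.mem_singleton_iff, Sym2.eq_iff]
    rintro (⟨h, -⟩ | ⟨-, h⟩) <;> have := hx.injOn (by simp; omega) (by simp; omega) h <;> omega
  have hle : T.deleteEdges (spineCut x n) ≤ T.deleteEdges {s(x k, x (k + 1))} :=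
    deleteEdges_anti (Set.singleton_subset_iff.mpr ⟨k, hk, by omega, rfl⟩)
  exact (hreach.mono hle).trans hcut.symm

lemma disjoint_spineComponent (hT : T.IsAcyclic) (hx : IsSpine T x n) {k m : ℕ}
    (hk : k ∈ Finset.Icc 1 n) (hm : m ∈ Finset.Icc 1 n) (hkm : k ≠ m) :
    Disjoint (spineComponent T x n k) (spineComponent T x n m) := by
  rw [Set.disjoint_left]
  intro v hvk hvm
  simp only [Finset.mem_Icc] at hk hm
  rcases Nat.lt_or_gt_of_ne hkm with h | h
  · exact hx.not_reachable_deleteEdges hT hk.1 h hm.2 (hvk.trans hvm.symm)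
  · exact hx.not_reachable_deleteEdges hT hm.1 h hk.2 (hvm.trans hvk.symm)

lemma eq_of_mem_spineComponent (hT : T.IsAcyclic) (hx : IsSpine T x n) {k m : ℕ}
    (hk : k ∈ Finset.Icc 1 n) (hm : m ∈ Finset.Icc 1 n) (h : x k ∈ spineComponent T x n m) :
    k = m := by
  by_contra hkm
  exact Set.disjoint_left.mp (hx.disjoint_spineComponent hT hk hm hkm)
    (mem_spineComponent_self ..) h

lemma eq_of_adj_of_mem_spineComponent (hT : T.IsAcyclic) (hx : IsSpine T x n) {k l : ℕ}
    {a b : V} (hk : k ∈ Finset.Icc 1 n) (hl : l ∈ Finset.Icc 1 n) (hkl : k ≠ l) (hab : T.Adj a b)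
    (ha : a ∈ spineComponent T x n k) (hb : b ∈ spineComponent T x n l) :
    a = x k ∧ b = x l ∧ (l = k + 1 ∨ k = l + 1) := by
  have he : s(a, b) ∈ spineCut x n := by
    by_contra he
    exact Set.disjoint_left.mp (hx.disjoint_spineComponent hT hk hl hkl)
      (mem_spineComponent_of_adj hab he ha) hb
  obtain ⟨i, hi, hin, he⟩ := he
  rcases Sym2.eq_iff.mp he with ⟨rfl, rfl⟩ | ⟨rfl, rfl⟩
  · obtain rfl := hx.eq_of_mem_spineComponent hT (by simp; omega) hk ha
    obtain rfl := hx.eq_of_mem_spineComponent hT (by simp; omega) hl hb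
    simp
  · obtain rfl := hx.eq_of_mem_spineComponent hT (by simp; omega) hk ha
    obtain rfl := hx.eq_of_mem_spineComponent hT (by simp; omega) hl hb
    simp

lemma mem_of_induce_connected_of_mem_sdiff (hT : T.IsTree) (hx : IsSpine T x n) {s : Set V}
    (hs : (T.induce s).Connected) {k : ℕ} (hk : k ∈ Finset.Icc 1 n) {u v : V}
    (hu : u ∈ s ∩ spineComponent T x n k) (hv : v ∈ s \ spineComponent T x n k) : x k ∈ s := by
  obtain ⟨a, ha, b, hb, hab⟩ := exists_adj_of_induce_connected hs hu hv
  obtain ⟨l, hl, hbl⟩ := exists_mem_spineComponent hT.connected (x := x) (n := n)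
    ((Finset.mem_Icc.mp hk).1.trans (Finset.mem_Icc.mp hk).2) b
  obtain ⟨rfl, -⟩ := hx.eq_of_adj_of_mem_spineComponent hT.isAcyclic hk hl
    (by rintro rfl; exact hb.2 hbl) hab ha.2 hbl
  exact ha.1

lemma subset_spineComponent (hT : T.IsTree) (hx : IsSpine T x n) {s : Set V}
    (hs : (T.induce s).Connected) {k : ℕ} (hk : k ∈ Finset.Icc 1 n) {u : V}
    (hu : u ∈ s ∩ spineComponent T x n k) (hxk : x k ∉ s) : s ⊆ spineComponent T x n k :=
  fun _ hv => by_contra fun hvk =>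
    hxk (hx.mem_of_induce_connected_of_mem_sdiff hT hs hk hu ⟨hv, hvk⟩)

lemma mem_of_le_of_le (hT : T.IsTree) (hx : IsSpine T x n) {s : Set V}
    (hs : (T.induce s).Connected) {i j m : ℕ} (hi : 1 ≤ i) (hj : j ≤ n) (him : i ≤ m)
    (hmj : m ≤ j) (hxi : x i ∈ s) (hxj : x j ∈ s) : x m ∈ s := by
  by_contra hxm
  -- An edge leaving the components to the left of `x m` can only be the path edge into `x m`.
  let A := {w | ∃ k, 1 ≤ k ∧ k < m ∧ w ∈ spineComponent T x n k}
  have him' : i < m := lt_of_le_of_ne him (by rintro rfl; exact hxm hxi)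
  have hxjA : x j ∉ A := by
    rintro ⟨k, hk, hkm, hjk⟩
    have := hx.eq_of_mem_spineComponent hT.isAcyclic (by simp; omega) (by simp; omega) hjk
    omega
  have hxiA : x i ∈ A := ⟨i, hi, him', mem_spineComponent_self ..⟩
  obtain ⟨a, ⟨-, k, hk, hkm, hak⟩, b, ⟨hbs, hbA⟩, hab⟩ :=
    exists_adj_of_induce_connected hs ⟨hxi, hxiA⟩ ⟨hxj, hxjA⟩
  obtain ⟨l, hl, hbl⟩ := exists_mem_spineComponent hT.connected (x := x) (n := n) (by omega) b
  have hml : m ≤ l := by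
    by_contra hlm
    exact hbA ⟨l, (Finset.mem_Icc.mp hl).1, by omega, hbl⟩
  obtain ⟨-, rfl, hlk⟩ := hx.eq_of_adj_of_mem_spineComponent hT.isAcyclic (by simp; omega) hl
    (by omega) hab hak hbl
  obtain rfl : l = m := by omega
  exact hxm hbs

lemma exists_mem_spineComponent_of_mem_subtreesThrough (hT : T.IsTree) (hx : IsSpine T x n)
    {i j : ℕ} (hi : 1 ≤ i) (hij : i ≤ j) (hj : j ≤ n) {s : Set V}
    (hs : s ∈ subtreesThrough T x n i j) {v : V} (hv : v ∈ s) :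
    ∃ m ∈ Finset.Icc i j, v ∈ spineComponent T x n m := by
  obtain ⟨k, hk, hvk⟩ := exists_mem_spineComponent hT.connected (x := x) (n := n) (by omega) v
  refine ⟨k, (hs.2 k hk).mp (by_contra fun hxk => ?_), hvk⟩
  have hxi : x i ∈ s := (hs.2 i (by simp; omega)).mpr (by simp [hij])
  have := hx.eq_of_mem_spineComponent hT.isAcyclic (by simp; omega) hk
    (hx.subset_spineComponent hT hs.1 hk ⟨hv, hvk⟩ hxk hxi)
  exact hxk ((hs.2 k hk).mpr (by subst this; simp [hij]))

lemma biUnion_mem_subtreesThrough (hT : T.IsAcyclic) (hx : IsSpine T x n) {i j : ℕ}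
    (hi : 1 ≤ i) (hij : i ≤ j) (hj : j ≤ n) {t : ℕ → Set V}
    (ht : ∀ m ∈ Finset.Icc i j,
      x m ∈ t m ∧ t m ⊆ spineComponent T x n m ∧ (T.induce (t m)).Connected) :
    (⋃ m ∈ Finset.Icc i j, t m) ∈ subtreesThrough T x n i j ∧
      ∀ m ∈ Finset.Icc i j, (⋃ m ∈ Finset.Icc i j, t m) ∩ spineComponent T x n m = t m := by
  have hIcc : ∀ m ∈ Finset.Icc i j, m ∈ Finset.Icc 1 n := fun m hm => by simp at hm ⊢; omega
  have hmem : ∀ m ∈ Finset.Icc i j, ∀ v ∈ spineComponent T x n m,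
      v ∈ ⋃ k ∈ Finset.Icc i j, t k ↔ v ∈ t m := by
    intro m hm v hvm
    simp only [Set.mem_iUnion, exists_prop]
    refine ⟨fun ⟨k, hk, hvk⟩ => ?_, fun hv => ⟨m, hm, hv⟩⟩
    by_cases hkm : k = m
    · exact hkm ▸ hvk
    · exact absurd hvm (Set.disjoint_left.mp
        (hx.disjoint_spineComponent hT (hIcc k hk) (hIcc m hm) hkm) ((ht k hk).2.1 hvk))
  refine ⟨⟨induce_biUnion_Icc_connected hij (fun m hm => ⟨(ht m hm).1, (ht m hm).2.2⟩)
    fun a ha haj => hx.adj a (by omega) (by omega), fun m hm => ?_⟩, fun m hm => ?_⟩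
  · refine ⟨fun hxm => ?_,
      fun hm' => (hmem m hm' _ (mem_spineComponent_self ..)).mpr (ht m hm').1⟩
    obtain ⟨k, hk, hxk⟩ := Set.mem_iUnion₂.mp hxm
    rwa [hx.eq_of_mem_spineComponent hT hm (hIcc k hk) ((ht k hk).2.1 hxk)]
  · ext v
    exact ⟨fun ⟨hv, hvm⟩ => (hmem m hm v hvm).mp hv,
      fun hv => ⟨(hmem m hm v ((ht m hm).2.1 hv)).mpr hv, (ht m hm).2.1 hv⟩⟩

lemma ncard_subtreesThrough [Fintype V] (hT : T.IsTree) (hx : IsSpine T x n) {i j : ℕ}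
    (hi : 1 ≤ i) (hij : i ≤ j) (hj : j ≤ n) :
    (subtreesThrough T x n i j).ncard =
      ∏ m ∈ Finset.Icc i j, numSubtreesIn T (spineComponent T x n m) (x m) := by
  classical
  let S : ℕ → Set (Set V) :=
    fun m => {t | x m ∈ t ∧ t ⊆ spineComponent T x n m ∧ (T.induce t).Connected}
  have hIcc : ∀ m ∈ Finset.Icc i j, m ∈ Finset.Icc 1 n := fun m hm => by simp at hm ⊢; omega
  have hsub : ∀ s ∈ subtreesThrough T x n i j, ∀ s' ∈ subtreesThrough T x n i j,
      (∀ m ∈ Finset.Icc i j, s ∩ spineComponent T x n m = s' ∩ spineComponent T x n m) →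
        s ⊆ s' := by
    intro s hs s' _ h v hv
    obtain ⟨m, hm, hvm⟩ := hx.exists_mem_spineComponent_of_mem_subtreesThrough hT hi hij hj hs hv
    have hv' : v ∈ s ∩ spineComponent T x n m := ⟨hv, hvm⟩
    exact (h m hm ▸ hv').1
  calc (subtreesThrough T x n i j).ncard
      = (Set.univ.pi fun m : Finset.Icc i j => S m).ncard := by
        refine Set.ncard_congr (fun s _ m => s ∩ spineComponent T x n m) ?_ ?_ ?_
        · intro s hs m _
          have hxm : x m ∈ s := (hs.2 m (hIcc m m.2)).mpr m.2
          exact ⟨⟨hxm, mem_spineComponent_self ..⟩, Set.inter_subset_right,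
            hT.isAcyclic.induce_inter_connected hs.1 (induce_spineComponent_connected ..)
              ⟨x m, hxm, mem_spineComponent_self ..⟩⟩
        · intro s s' hs hs' h
          exact (hsub s hs s' hs' fun m hm => congrFun h ⟨m, hm⟩).antisymm
            (hsub s' hs' s hs fun m hm => (congrFun h ⟨m, hm⟩).symm)
        · intro t ht
          let t' : ℕ → Set V := fun m => if h : m ∈ Finset.Icc i j then t ⟨m, h⟩ else ∅
          have ht' : ∀ m (hm : m ∈ Finset.Icc i j), t' m = t ⟨m, hm⟩ := fun m hm => dif_pos hm
          obtain ⟨hs, hst⟩ := hx.biUnion_mem_subtreesThrough hT.isAcyclic hi hij hj (t := t')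
            fun m hm => ht' m hm ▸ ht ⟨m, hm⟩ (Set.mem_univ _)
          exact ⟨_, hs, funext fun m => (hst m m.2).trans (ht' m m.2)⟩
    _ = ∏ m : Finset.Icc i j, (S m).ncard := Set.ncard_univ_pi _
    _ = ∏ m ∈ Finset.Icc i j, numSubtreesIn T (spineComponent T x n m) (x m) :=
        Finset.prod_coe_sort (Finset.Icc i j) fun m => (S m).ncard

lemma setOf_subtrees_eq (hT : T.IsTree) (hx : IsSpine T x n) (hn : 1 ≤ n) :
    {s : Set V | s.Nonempty ∧ (T.induce s).Connected} =
      (⋃ p ∈ (Finset.Icc 1 n).sigma (Finset.Icc · n), subtreesThrough T x n p.1 p.2) ∪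
        ⋃ m ∈ Finset.Icc 1 n, subtreesAvoiding T (spineComponent T x n m) (x m) := by
  classical
  ext s
  simp only [Set.mem_union, Set.mem_iUnion, Finset.mem_sigma, exists_prop, Sigma.exists]
  constructor
  · rintro ⟨⟨v, hv⟩, hs⟩
    by_cases hmeet : ∃ m ∈ Finset.Icc 1 n, x m ∈ s
    · let I := (Finset.Icc 1 n).filter (x · ∈ s)
      have hI : I.Nonempty := by simpa [I, Finset.Nonempty] using hmeet
      have hmin := Finset.mem_filter.mp (I.min'_mem hI)
      have hmax := Finset.mem_filter.mp (I.max'_mem hI)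
      simp only [Finset.mem_Icc] at hmin hmax
      refine Or.inl ⟨I.min' hI, I.max' hI, ⟨Finset.mem_Icc.mpr hmin.1,
        Finset.mem_Icc.mpr ⟨I.min'_le_max' hI, hmax.1.2⟩⟩, hs,
        fun m hm => ⟨fun hxm => ?_, fun hm' => ?_⟩⟩
      · have hmI : m ∈ I := Finset.mem_filter.mpr ⟨hm, hxm⟩
        exact Finset.mem_Icc.mpr ⟨I.min'_le m hmI, I.le_max' m hmI⟩
      · obtain ⟨h₁, h₂⟩ := Finset.mem_Icc.mp hm'
        exact hx.mem_of_le_of_le hT hs hmin.1.1 hmax.1.2 h₁ h₂ hmin.2 hmax.2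
    · push Not at hmeet
      obtain ⟨m, hm, hvm⟩ := exists_mem_spineComponent hT.connected (x := x) hn v
      exact Or.inr ⟨m, hm, ⟨v, hv⟩,
        hx.subset_spineComponent hT hs hm ⟨hv, hvm⟩ (hmeet m hm), hs, hmeet m hm⟩
  · rintro (⟨i, j, ⟨hi, hj⟩, hs⟩ | ⟨m, -, hs⟩)
    · simp only [Finset.mem_Icc] at hi hj
      exact ⟨⟨x i, (hs.2 i (by simp; omega)).mpr (by simp [hj.1])⟩, hs.1⟩
    · exact ⟨hs.1, hs.2.2.1⟩

lemma disjoint_subtreesAvoiding (hT : T.IsAcyclic) (hx : IsSpine T x n) {k m : ℕ}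
    (hk : k ∈ Finset.Icc 1 n) (hm : m ∈ Finset.Icc 1 n) (hkm : k ≠ m) :
    Disjoint (subtreesAvoiding T (spineComponent T x n k) (x k))
      (subtreesAvoiding T (spineComponent T x n m) (x m)) := by
  refine Set.disjoint_left.mpr fun s ⟨⟨v, hv⟩, hsk, _⟩ ⟨_, hsm, _⟩ => ?_
  exact Set.disjoint_left.mp (hx.disjoint_spineComponent hT hk hm hkm) (hsk hv) (hsm hv)

lemma disjoint_subtreesThrough_subtreesAvoiding (hT : T.IsAcyclic) (hx : IsSpine T x n)
    {i j m : ℕ} (hi : 1 ≤ i) (hij : i ≤ j) (hj : j ≤ n) (hm : m ∈ Finset.Icc 1 n) :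
    Disjoint (subtreesThrough T x n i j) (subtreesAvoiding T (spineComponent T x n m) (x m)) := by
  refine Set.disjoint_left.mpr fun s hs ⟨_, hsm, _, hxm⟩ => hxm ?_
  have hxi : x i ∈ s := (hs.2 i (by simp; omega)).mpr (by simp [hij])
  rwa [← hx.eq_of_mem_spineComponent hT (by simp; omega) hm (hsm hxi)]

lemma numSubtrees_eq [Fintype V] (hT : T.IsTree) (hx : IsSpine T x n) (hn : 1 ≤ n) :
    numSubtrees T =
      ∑ i ∈ Finset.Icc 1 n, ∑ j ∈ Finset.Icc i n, (subtreesThrough T x n i j).ncard +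
        ∑ m ∈ Finset.Icc 1 n, (subtreesAvoiding T (spineComponent T x n m) (x m)).ncard := by
  rw [numSubtrees, hx.setOf_subtrees_eq hT hn, Set.ncard_union_eq, Set.ncard_biUnion_finset,
    Set.ncard_biUnion_finset, Finset.sum_sigma]
  · exact fun m hm k hk hmk => hx.disjoint_subtreesAvoiding hT.isAcyclic hm hk hmk
  · rintro ⟨i, j⟩ hp ⟨i', j'⟩ hp' hne
    simp only [Finset.coe_sigma, Set.mem_sigma_iff, Finset.mem_coe, Finset.mem_Icc] at hp hp'
    exact disjoint_subtreesThrough hp.1.1 hp.2.1 hp.2.2 hp'.1.1 hp'.2.2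
      (by rintro ⟨⟩; exact hne rfl)
  · simp only [Set.disjoint_iUnion_left, Set.disjoint_iUnion_right, Finset.mem_sigma,
      Finset.mem_Icc]
    exact fun m hm p hp => hx.disjoint_subtreesThrough_subtreesAvoiding hT.isAcyclic hp.1.1
      hp.2.1 hp.2.2 (Finset.mem_Icc.mpr hm)

end IsSpine

end Spine

end SimpleGraph

theorem subtree_path_decomposition_general {V : Type*} [Fintype V] (T : SimpleGraph V)
    (hT : T.IsTree) (n : ℕ) (hn : 1 ≤ n) (x : ℕ → V)
    (hadj : ∀ i ≤ n, T.Adj (x i) (x (i + 1)))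
    (hinj : Set.InjOn x (Set.Icc 0 (n + 1)))
    (C FX : ℕ → ℕ)
    (hC : ∀ m ∈ Finset.Icc 1 n, C m =
      numSubtreesIn T
        (reachSet (T.deleteEdges {e | ∃ i, 1 ≤ i ∧ i < n ∧ e = s(x i, x (i + 1))}) (x m))
        (x m))
    (hFX : ∀ m ∈ Finset.Icc 1 n, FX m =
      numSubtreesInSet T
        (reachSet (T.deleteEdges {e | ∃ i, 1 ≤ i ∧ i < n ∧ e = s(x i, x (i + 1))}) (x m))) :
    numSubtrees T =
      (∑ i ∈ Finset.Icc 1 n, ∑ j ∈ Finset.Icc i n, ∏ m ∈ Finset.Icc i j, C m) +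
        ∑ m ∈ Finset.Icc 1 n, (FX m - C m) := by
  have hx : IsSpine T x n :=
    ⟨fun i _ hi => hadj i hi.le, hinj.mono (Set.Icc_subset_Icc (Nat.zero_le 1) (by omega))⟩
  rw [hx.numSubtrees_eq hT hn]
  congr 1
  · refine Finset.sum_congr rfl fun i hi => Finset.sum_congr rfl fun j hj => ?_
    simp only [Finset.mem_Icc] at hi hj
    rw [hx.ncard_subtreesThrough hT hi.1 hj.1 hj.2]
    exact Finset.prod_congr rfl fun m hm => (hC m (by simp at hm ⊢; omega)).symm
  · refine Finset.sum_congr rfl fun m hm => ?_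
    rw [ncard_subtreesAvoiding, hC m hm, hFX m hm]
    rfl

/-- Let `T` be a tree with a path `v₁ x₁ … xₙ v₂` between
leaves (`x 0 = v₁`, `x (n+1) = v₂`; the leaves `v₁, v₂` are absorbed into
`X_1, X_n`, i.e. only the internal path edges `x_i x_{i+1}`, `1 ≤ i < n`, are
deleted to form the components `X_m ∋ x_m`).  Every subtree of `T` meeting
`{x_1,…,x_n}` meets it in a subpath `x_i … x_j` and there are `Π_{m=i}^{j} C_m`
such subtrees, where `C m = f_{x_m}(X_m)`; the remaining subtrees lie inside
some `X_m` and avoid `x_m`.  Hence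
`f(T) = Σ_{1 ≤ i ≤ j ≤ n} Π_{m=i}^{j} C m + Σ_{m=1}^{n} (f(X_m) - C m)`. -/
theorem subtree_path_decomposition {V : Type*} [Fintype V] (T : SimpleGraph V)
    [DecidableRel T.Adj] (hT : T.IsTree) (n : ℕ) (hn : 1 ≤ n) (x : ℕ → V)
    (hadj : ∀ i ≤ n, T.Adj (x i) (x (i + 1)))
    (hinj : Set.InjOn x (Set.Icc 0 (n + 1)))
    (hleaf₁ : T.degree (x 0) = 1) (hleaf₂ : T.degree (x (n + 1)) = 1)
    (C FX : ℕ → ℕ)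
    (hC : ∀ m ∈ Finset.Icc 1 n, C m =
      numSubtreesIn T
        (reachSet (T.deleteEdges {e | ∃ i, 1 ≤ i ∧ i < n ∧ e = s(x i, x (i + 1))}) (x m))
        (x m))
    (hFX : ∀ m ∈ Finset.Icc 1 n, FX m =
      numSubtreesInSet T
        (reachSet (T.deleteEdges {e | ∃ i, 1 ≤ i ∧ i < n ∧ e = s(x i, x (i + 1))}) (x m))) :
    numSubtrees T =
      (∑ i ∈ Finset.Icc 1 n, ∑ j ∈ Finset.Icc i n, ∏ m ∈ Finset.Icc i j, C m) +
        ∑ m ∈ Finset.Icc 1 n, (FX m - C m) :=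
  subtree_path_decomposition_general T hT n hn x hadj hinj C FX hC hFX
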